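/- arXiv:1509.01348 — 5 statements merged into one kernel-verified Lean document; each statement's English description precedes it below -/
import Mathlib

section
/- Define A_t = Ω_t D Ω_t^T where D = diag(−1, 3) and Ω_t is the 2×2 rotation matrix of angle t. Then the solution R_t of ∂_t R_t = −A_t R_t, R_0 = I_2, is given by R_t = Ω_t exp(t M) with M = [[1,1],[−1,−3]], and ‖R_t‖ does not converge to 0 as t → ∞ (indeed sup_t ‖R_t‖ = ∞), even though (1/t)∫_0^t A_s ds → I_2 as t → ∞. -/
open MeasureTheory Real Filter

/-- The operator norm of a matrix with respect to the Euclidean norm. -/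
noncomputable def opNorm {d : ℕ} (A : Matrix (Fin d) (Fin d) ℝ) : ℝ :=
  ‖LinearMap.toContinuousLinearMap (Matrix.toEuclideanLin A)‖

/-- The rotation matrix of angle `t`. -/
noncomputable def Omg (t : ℝ) : Matrix (Fin 2) (Fin 2) ℝ :=
  !![Real.cos t, -Real.sin t; Real.sin t, Real.cos t]

/-- `A_t = Ω_t D Ω_tᵀ` with `D = diag(-1, 3)`. -/
noncomputable def Amat (t : ℝ) : Matrix (Fin 2) (Fin 2) ℝ :=
  Omg t * !![(-1 : ℝ), 0; 0, 3] * (Omg t).transpose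

/-- The matrix `M = [[1,1],[-1,-3]]`. -/
def Mmat : Matrix (Fin 2) (Fin 2) ℝ := !![(1 : ℝ), 1; -1, -3]

/-- The claimed solution `R_t = Ω_t exp (t M)`. -/
noncomputable def Rmat (t : ℝ) : Matrix (Fin 2) (Fin 2) ℝ :=
  Omg t * NormedSpace.exp (t • Mmat)

/-!
Since `∂ₜ Ω_t = Ω_t J` and `A_t Ω_t = Ω_t D`, the product rule gives
`∂ₜ (Ω_t exp (tM)) = Ω_t (J + M) exp (tM)`, and `M` is chosen so that `J + M = -D`.
On the eigenvector `v = (1, √3 - 2)` of `M` for the eigenvalue `√3 - 1 > 0` we get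
`R_t v = e^{(√3 - 1) t} Ω_t v`, and `Ω_t` is orthogonal, so `‖R_t‖ ≥ e^{(√3 - 1) t} → ∞`.
Finally `A_s = I + cos (2s) K + sin (2s) L`; the oscillating part has a bounded primitive,
so its Cesàro means vanish and those of `A` tend to `I`.
-/

open NormedSpace Matrix

theorem exp_mul_of_mul_eq_smul {𝕂 𝔸 : Type*} [RCLike 𝕂] [NormedRing 𝔸] [NormedAlgebra 𝕂 𝔸]
    [CompleteSpace 𝔸] {a b : 𝔸} {c : 𝕂} (h : a * b = c • b) : exp a * b = exp c • b := by
  have hpow (n : ℕ) : a ^ n * b = c ^ n • b := by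
    induction n with
    | zero => simp
    | succ n ih => rw [pow_succ', mul_assoc, ih, mul_smul_comm, h, smul_smul, pow_succ, mul_comm]
  rw [exp_eq_tsum 𝕂, exp_eq_tsum 𝕂, ← (expSeries_summable' a).tsum_mul_right,
    ← (expSeries_summable' c).tsum_smul_const]
  simp_rw [smul_mul_assoc, hpow, smul_smul, smul_eq_mul]

section LinftyOp

/- All norms on matrices induce the same topology, hence the same `exp` and the same
derivatives; the `ℓ∞` operator norm provides the normed-algebra structure that the
calculus lemmas require. -/
attribute [local instance] Matrix.linftyOpNormedRing Matrix.linftyOpNormedAlgebra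

theorem Matrix.exp_mulVec_of_mulVec_eq_smul {𝕂 n : Type*} [RCLike 𝕂] [Fintype n] [DecidableEq n]
    {A : Matrix n n 𝕂} {v : n → 𝕂} {c : 𝕂} (h : A *ᵥ v = c • v) : exp A *ᵥ v = exp c • v := by
  rcases isEmpty_or_nonempty n with hn | hn
  · exact Subsingleton.elim _ _
  have hcol : A * replicateCol n v = c • replicateCol n v := by
    rw [← replicateCol_mulVec, h, replicateCol_smul]
  rw [← replicateCol_inj (ι := n), replicateCol_mulVec, replicateCol_smul]
  exact exp_mul_of_mul_eq_smul hcol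

end LinftyOp

theorem Matrix.norm_toEuclideanCLM_of_mem_unitaryGroup {𝕜 n : Type*} [RCLike 𝕜] [Fintype n]
    [DecidableEq n] {U : Matrix n n 𝕜} (hU : U ∈ unitaryGroup n 𝕜) (x : EuclideanSpace 𝕜 n) :
    ‖toEuclideanCLM (n := n) (𝕜 := 𝕜) U x‖ = ‖x‖ :=
  ContinuousLinearMap.norm_map_of_mem_unitary
    (Unitary.map_mem (toEuclideanCLM (n := n) (𝕜 := 𝕜)) hU) x

theorem tendsto_inv_mul_integral_of_hasDerivAt {f F : ℝ → ℝ} {c C : ℝ} (hf : Continuous f)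
    (hF : ∀ s, HasDerivAt F (f s - c) s) (hFC : ∀ s, |F s| ≤ C) :
    Tendsto (fun t => (1 / t) * ∫ s in (0 : ℝ)..t, f s) atTop (nhds c) := by
  have hint (t : ℝ) : ∫ s in (0 : ℝ)..t, f s = c * t + (F t - F 0) := by
    have := intervalIntegral.integral_eq_sub_of_hasDerivAt (fun s _ => hF s)
      ((hf.sub continuous_const).intervalIntegrable 0 t)
    rw [intervalIntegral.integral_sub (hf.intervalIntegrable 0 t) intervalIntegrable_const,
      intervalIntegral.integral_const, sub_zero, smul_eq_mul] at this
    linarith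
  have hbdd : Tendsto (fun t => (F t - F 0) * t⁻¹) atTop (nhds 0) := by
    refine isBoundedUnder_le_mul_tendsto_zero ⟨2 * C, ?_⟩ tendsto_inv_atTop_zero
    refine eventually_map.2 (Eventually.of_forall fun t => ?_)
    simp only [Function.comp_apply, Real.norm_eq_abs]
    linarith [abs_sub (F t) (F 0), hFC t, hFC 0]
  have := hbdd.const_add c
  rw [add_zero] at this
  refine this.congr' ?_
  filter_upwards [eventually_gt_atTop 0] with t ht
  rw [hint]
  field_simp

theorem tendsto_average_const_add_cos_add_sin (c a b : ℝ) {ω : ℝ} (hω : ω ≠ 0) :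
    Tendsto (fun t => (1 / t) * ∫ s in (0 : ℝ)..t, c + a * cos (ω * s) + b * sin (ω * s))
      atTop (nhds c) := by
  refine tendsto_inv_mul_integral_of_hasDerivAt
    (F := fun s => (a * sin (ω * s) - b * cos (ω * s)) / ω) (C := (|a| + |b|) / |ω|)
    (by fun_prop) (fun s => ?_) (fun s => ?_)
  · have hω' := (hasDerivAt_id s).const_mul ω
    refine (((hω'.sin.const_mul a).sub (hω'.cos.const_mul b)).div_const ω).congr_deriv ?_
    simp only [id, mul_one]
    field_simp
    ring
  · rw [abs_div]
    gcongr
    calc |a * sin (ω * s) - b * cos (ω * s)| ≤ |a| * |sin (ω * s)| + |b| * |cos (ω * s)| := by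
          rw [← abs_mul, ← abs_mul]; exact abs_sub _ _
      _ ≤ |a| + |b| := by
          gcongr <;> [exact mul_le_of_le_one_right (abs_nonneg a) (abs_sin_le_one _);
            exact mul_le_of_le_one_right (abs_nonneg b) (abs_cos_le_one _)]

def rotGen : Matrix (Fin 2) (Fin 2) ℝ := !![0, -1; 1, 0]

lemma rotGen_mul_rotGen : rotGen * rotGen = -1 := by
  ext i j; fin_cases i <;> fin_cases j <;> simp [rotGen]

lemma rotGen_add_Mmat : rotGen + Mmat = -!![(-1 : ℝ), 0; 0, 3] := by
  ext i j; fin_cases i <;> fin_cases j <;> simp [rotGen, Mmat]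

lemma Omg_eq (t : ℝ) : Omg t = cos t • 1 + sin t • rotGen := by
  ext i j; fin_cases i <;> fin_cases j <;> simp [Omg, rotGen]

lemma Omg_mem_unitaryGroup (t : ℝ) : Omg t ∈ unitaryGroup (Fin 2) ℝ := by
  rw [mem_unitaryGroup_iff', star_eq_conjTranspose, conjTranspose_eq_transpose_of_trivial]
  ext i j; fin_cases i <;> fin_cases j <;> simp [Omg, Matrix.mul_apply, Fin.sum_univ_two] <;>
    nlinarith [sin_sq_add_cos_sq t]

lemma Amat_mul_Omg (t : ℝ) : Amat t * Omg t = Omg t * !![(-1 : ℝ), 0; 0, 3] := by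
  have h := Omg_mem_unitaryGroup t
  rw [mem_unitaryGroup_iff', star_eq_conjTranspose, conjTranspose_eq_transpose_of_trivial] at h
  rw [Amat, mul_assoc, h, mul_one]

lemma Amat_eq (s : ℝ) :
    Amat s = 1 + cos (2 * s) • !![(-2 : ℝ), 0; 0, 2] + sin (2 * s) • !![(0 : ℝ), -2; -2, 0] := by
  rw [Amat, cos_two_mul, sin_two_mul]
  ext i j; fin_cases i <;> fin_cases j <;> simp [Omg, Matrix.mul_apply, Fin.sum_univ_two] <;>
    nlinarith [sin_sq_add_cos_sq s]

section LinftyOp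

attribute [local instance] Matrix.linftyOpNormedRing Matrix.linftyOpNormedAlgebra

lemma hasDerivAt_Omg (t : ℝ) : HasDerivAt Omg (Omg t * rotGen) t := by
  have h := ((hasDerivAt_cos t).smul_const (1 : Matrix (Fin 2) (Fin 2) ℝ)).add
    ((hasDerivAt_sin t).smul_const rotGen)
  rw [funext Omg_eq]
  refine h.congr_deriv ?_
  rw [add_mul, smul_mul_assoc, smul_mul_assoc, one_mul, rotGen_mul_rotGen]
  module

lemma hasDerivAt_Rmat (t : ℝ) : HasDerivAt Rmat (-(Amat t * Rmat t)) t := by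
  refine ((hasDerivAt_Omg t).mul (hasDerivAt_exp_smul_const' Mmat t)).congr_deriv ?_
  rw [Rmat, ← mul_assoc (Amat t), Amat_mul_Omg, ← mul_assoc (Omg t) Mmat, ← add_mul, ← mul_add,
    rotGen_add_Mmat, mul_neg, neg_mul]
  rfl

end LinftyOp

lemma Rmat_zero : Rmat 0 = 1 := by
  rw [Rmat, zero_smul, NormedSpace.exp_zero, mul_one, Omg_eq, cos_zero, sin_zero, one_smul,
    zero_smul, add_zero]

lemma Mmat_mulVec_eigenvector : Mmat *ᵥ ![1, √3 - 2] = (√3 - 1) • ![1, √3 - 2] := by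
  have h : √3 * √3 = 3 := Real.mul_self_sqrt (by norm_num)
  ext i; fin_cases i <;> simp [Mmat]
  · ring
  · linear_combination -h

lemma Rmat_mulVec_eigenvector (t : ℝ) :
    Rmat t *ᵥ ![1, √3 - 2] = Real.exp (t * (√3 - 1)) • (Omg t *ᵥ ![1, √3 - 2]) := by
  have h : (t • Mmat) *ᵥ ![1, √3 - 2] = (t * (√3 - 1)) • ![1, √3 - 2] := by
    rw [smul_mulVec, Mmat_mulVec_eigenvector, smul_smul]
  rw [Rmat, ← mulVec_mulVec, exp_mulVec_of_mulVec_eq_smul h, mulVec_smul, Real.exp_eq_exp_ℝ]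

lemma exp_le_opNorm_Rmat (t : ℝ) : Real.exp (t * (√3 - 1)) ≤ opNorm (Rmat t) := by
  set v : EuclideanSpace ℝ (Fin 2) := WithLp.toLp 2 ![1, √3 - 2]
  have hv : v ≠ 0 := fun h => by simpa [v] using congrArg (· 0) h
  have hRv : ‖toEuclideanCLM (n := Fin 2) (𝕜 := ℝ) (Rmat t) v‖ =
      Real.exp (t * (√3 - 1)) * ‖v‖ := by
    rw [toEuclideanCLM_toLp, Rmat_mulVec_eigenvector, WithLp.toLp_smul, norm_smul,
      ← toEuclideanCLM_toLp, norm_toEuclideanCLM_of_mem_unitaryGroup (Omg_mem_unitaryGroup t),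
      Real.norm_of_nonneg (Real.exp_pos _).le]
  exact le_of_mul_le_mul_right (hRv ▸ (toEuclideanCLM (n := Fin 2) (𝕜 := ℝ) (Rmat t)).le_opNorm v)
    (norm_pos_iff.2 hv)

lemma tendsto_opNorm_Rmat_atTop : Tendsto (fun t => opNorm (Rmat t)) atTop atTop := by
  have hpos : 0 < √3 - 1 := by
    have : (1 : ℝ) < √3 := by rw [Real.lt_sqrt zero_le_one]; norm_num
    linarith
  exact tendsto_atTop_mono exp_le_opNorm_Rmat
    (Real.tendsto_exp_atTop.comp (tendsto_id.atTop_mul_const hpos))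

lemma tendsto_average_Amat :
    Tendsto (fun t => Matrix.of fun i j => (1 / t) * ∫ s in (0:ℝ)..t, Amat s i j)
      atTop (nhds (1 : Matrix (Fin 2) (Fin 2) ℝ)) := by
  refine tendsto_pi_nhds.2 fun i => tendsto_pi_nhds.2 fun j => ?_
  simp only [of_apply, Amat_eq, Matrix.add_apply, Matrix.smul_apply, smul_eq_mul,
    mul_comm (cos _), mul_comm (sin _)]
  exact tendsto_average_const_add_cos_add_sin _ _ _ two_ne_zero

theorem counterexample_cesaro :
    (∀ t, ∀ i j, HasDerivAt (fun u => Rmat u i j) ((-(Amat t * Rmat t)) i j) t) ∧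
    Rmat 0 = 1 ∧
    ¬ Tendsto (fun t => opNorm (Rmat t)) atTop (nhds 0) ∧
    ¬ BddAbove (Set.range fun t => opNorm (Rmat t)) ∧
    Tendsto (fun t => Matrix.of fun i j => (1 / t) * ∫ s in (0:ℝ)..t, Amat s i j)
      atTop (nhds (1 : Matrix (Fin 2) (Fin 2) ℝ)) :=
  ⟨fun t i j => hasDerivAt_pi.1 (hasDerivAt_pi.1 (hasDerivAt_Rmat t) i) j, Rmat_zero,
    not_tendsto_nhds_of_tendsto_atTop tendsto_opNorm_Rmat_atTop 0,
    not_bddAbove_of_tendsto_atTop tendsto_opNorm_Rmat_atTop, tendsto_average_Amat⟩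
end

section
/- Let η > 0, let E > 0 and 𝐕 ≥ 0, and let m ≤ 0 satisfy −m (𝐕 + E²)/E² < η. Then the interval (η/(𝐕+E²), (η+m)/𝐕) ⊂ (0,∞) is nonempty (with convention that the upper bound is +∞ if 𝐕 = 0): there exists δ > 0 such that both c₁(δ) = η + m − δ𝐕/(2E) > 0 and c₂(δ) = −η + (δ/2)(𝐕+E²)/E > 0. Moreover the optimal value of min(c₁(δ), c₂(δ)/δ) over δ > 0 equals β/2 where β = (η + m + (E²+𝐕)/(2E)) − sqrt((η + m − (E²+𝐕)/(2E))² + 2η𝐕/E), and β > 0. -/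
open Real


lemma rate_aux (η A B C : ℝ) (hη : 0 < η) (hB : 0 ≤ B) (hC : 0 < C)
    (hmain : η * B < A * C) :
    (∃ δ : ℝ, 0 < δ ∧ 0 < A - δ * B ∧ 0 < δ * C - η) ∧
    0 < (A + C) - Real.sqrt ((A - C) ^ 2 + 4 * (η * B)) ∧
    IsLUB {r : ℝ | ∃ δ : ℝ, 0 < δ ∧ r = min (A - δ * B) ((δ * C - η) / δ)}
      (((A + C) - Real.sqrt ((A - C) ^ 2 + 4 * (η * B))) / 2) := by
  have hA : 0 < A := by nlinarith [mul_nonneg hη.le hB]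
  set S := Real.sqrt ((A - C) ^ 2 + 4 * (η * B)) with hSdef
  have harg : 0 ≤ (A - C) ^ 2 + 4 * (η * B) := by positivity
  have hS0 : 0 ≤ S := Real.sqrt_nonneg _
  have hS2 : S ^ 2 = (A - C) ^ 2 + 4 * (η * B) := Real.sq_sqrt harg
  have hSpos : S < A + C := by
    rw [hSdef, Real.sqrt_lt' (by linarith : (0:ℝ) < A + C)]
    nlinarith [hmain]
  set s := ((A + C) - S) / 2 with hsdef
  have hs0 : 0 < s := by rw [hsdef]; linarith
  have habs : |A - C| ≤ S := by
    have h : Real.sqrt ((A - C) ^ 2) ≤ S :=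
      Real.sqrt_le_sqrt (by nlinarith [mul_nonneg hη.le hB])
    rwa [Real.sqrt_sq_eq_abs] at h
  have hsA : s ≤ A := by have h := neg_le_abs (A - C); rw [hsdef]; linarith
  have hsC : s ≤ C := by have h := le_abs_self (A - C); rw [hsdef]; linarith
  have hprod : (A - s) * (C - s) = η * B := by
    rw [hsdef]; linear_combination hS2 / 4
  have key : ∀ b : ℝ, b < s → ∃ δ : ℝ, 0 < δ ∧ b < A - δ * B ∧ b < (δ * C - η) / δ := by
    intro b hb
    have hCb : 0 < C - b := by linarith
    have hAb : 0 < A - b := by linarith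
    have hprodb : η * B < (A - b) * (C - b) := by
      nlinarith [hprod, mul_pos (sub_pos.mpr hb) (sub_pos.mpr hb),
        mul_nonneg (sub_nonneg.mpr hsA) (sub_pos.mpr hb).le,
        mul_nonneg (sub_nonneg.mpr hsC) (sub_pos.mpr hb).le]
    set X := (A - b) * (C - b) - η * B with hX
    have hX0 : 0 < X := by rw [hX]; linarith
    have hB1 : (0:ℝ) < B + 1 := by linarith
    refine ⟨η / (C - b) + X / ((C - b) * (B + 1)), by positivity, ?_, ?_⟩
    · have e1 : A - (η / (C - b) + X / ((C - b) * (B + 1))) * B - b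
          = X / ((C - b) * (B + 1)) := by
        rw [hX]; field_simp; ring
      have : 0 < X / ((C - b) * (B + 1)) := by positivity
      linarith [e1, this]
    · rw [lt_div_iff₀ (by positivity)]
      have e2 : (η / (C - b) + X / ((C - b) * (B + 1))) * (C - b) = η + X / (B + 1) := by
        field_simp
      have h3 : 0 < X / (B + 1) := by positivity
      nlinarith [e2, h3]
  constructor
  · obtain ⟨δ, hδ, h1, h2⟩ := key 0 hs0
    refine ⟨δ, hδ, by linarith, ?_⟩
    have := mul_pos h2 hδ
    rwa [div_mul_cancel₀ _ (ne_of_gt hδ)] at this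
  refine ⟨by linarith, ?_, ?_⟩
  · rintro r ⟨δ, hδ, rfl⟩
    by_contra h
    push_neg at h
    rw [lt_min_iff] at h
    obtain ⟨h1, h2⟩ := h
    rw [lt_div_iff₀ hδ] at h2
    have hu : 0 < A - s - δ * B := by linarith
    have hv : 0 < δ * C - s * δ - η := by linarith
    have hCs : 0 < C - s := by nlinarith [hv, hδ, hη]
    nlinarith [mul_pos hu hCs, mul_nonneg hB hv.le, hprod]
  · intro b hb
    by_contra h
    push_neg at h
    obtain ⟨δ, hδ, h1, h2⟩ := key b h
    have hmem : min (A - δ * B) ((δ * C - η) / δ) ≤ b := hb ⟨δ, hδ, rfl⟩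
    have := lt_min h1 h2
    linarith

theorem rate_optimization (η E Vv m : ℝ) (hη : 0 < η) (hE : 0 < E) (hVv : 0 ≤ Vv)
    (hm : m ≤ 0) (hcrit : -m * (Vv + E ^ 2) / E ^ 2 < η) :
    (∃ δ : ℝ, 0 < δ ∧
      0 < η + m - δ * Vv / (2 * E) ∧
      0 < -η + (δ / 2) * (Vv + E ^ 2) / E) ∧
    0 < (η + m + (E ^ 2 + Vv) / (2 * E)) -
        Real.sqrt ((η + m - (E ^ 2 + Vv) / (2 * E)) ^ 2 + 2 * η * Vv / E) ∧
    IsLUB {r : ℝ | ∃ δ : ℝ, 0 < δ ∧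
        r = min (η + m - δ * Vv / (2 * E)) ((-η + (δ / 2) * (Vv + E ^ 2) / E) / δ)}
      (((η + m + (E ^ 2 + Vv) / (2 * E)) -
        Real.sqrt ((η + m - (E ^ 2 + Vv) / (2 * E)) ^ 2 + 2 * η * Vv / E)) / 2) := by
  have hcrit' : -m * (Vv + E ^ 2) < η * E ^ 2 := by
    rw [div_lt_iff₀ (by positivity)] at hcrit; linarith
  have hmain : η * (Vv / (2 * E)) < (η + m) * ((Vv + E ^ 2) / (2 * E)) := by
    rw [show η * (Vv / (2 * E)) = η * Vv / (2 * E) from by ring,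
        show (η + m) * ((Vv + E ^ 2) / (2 * E)) = (η + m) * (Vv + E ^ 2) / (2 * E) from by ring,
        div_lt_div_iff₀ (by positivity) (by positivity)]
    nlinarith [hcrit']
  obtain ⟨h1, h2, h3⟩ := rate_aux η (η + m) (Vv / (2 * E)) ((Vv + E ^ 2) / (2 * E))
    hη (by positivity) (by positivity) hmain
  have harg : (η + m - (E ^ 2 + Vv) / (2 * E)) ^ 2 + 2 * η * Vv / E
      = (η + m - (Vv + E ^ 2) / (2 * E)) ^ 2 + 4 * (η * (Vv / (2 * E))) := by
    field_simp; ring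
  have hout : η + m + (E ^ 2 + Vv) / (2 * E) = (η + m) + (Vv + E ^ 2) / (2 * E) := by ring
  have hfun : ∀ δ : ℝ, min (η + m - δ * Vv / (2 * E)) ((-η + (δ / 2) * (Vv + E ^ 2) / E) / δ)
      = min ((η + m) - δ * (Vv / (2 * E))) ((δ * ((Vv + E ^ 2) / (2 * E)) - η) / δ) := by
    intro δ; congr 1 <;> ring
  refine ⟨?_, ?_, ?_⟩
  · obtain ⟨δ, hδ, ha, hb⟩ := h1
    refine ⟨δ, hδ, ?_, ?_⟩
    · have e : η + m - δ * Vv / (2 * E) = (η + m) - δ * (Vv / (2 * E)) := by ring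
      rw [e]; exact ha
    · have e : -η + (δ / 2) * (Vv + E ^ 2) / E = δ * ((Vv + E ^ 2) / (2 * E)) - η := by ring
      rw [e]; exact hb
  · rw [harg, hout]; exact h2
  · have hset : {r : ℝ | ∃ δ : ℝ, 0 < δ ∧
        r = min (η + m - δ * Vv / (2 * E)) ((-η + (δ / 2) * (Vv + E ^ 2) / E) / δ)}
        = {r : ℝ | ∃ δ : ℝ, 0 < δ ∧
        r = min ((η + m) - δ * (Vv / (2 * E))) ((δ * ((Vv + E ^ 2) / (2 * E)) - η) / δ)} := by
      ext r
      simp only [Set.mem_setOf_eq]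
      exact exists_congr fun δ => and_congr_right fun _ => by rw [hfun δ]
    rw [hset, harg, hout]
    exact h3
end

section
/- For d ≥ 2 and β, γ > 0, the second moment of the measure proportional to e^{β(γ|x|² − |x|⁴)}dx on ℝ^d exceeds γ/2: (∫_{ℝ^d} |x|² e^{β(γ|x|²−|x|⁴)}dx)/(∫_{ℝ^d} e^{β(γ|x|²−|x|⁴)}dx) > γ/2. Consequently, with v(x) = β(4|x|² − 2γ) and V(x) = β(|x|⁴ − γ|x|²) + const normalizing e^{−V} to a probability, one has ∫ v(x) e^{−V(x)}dx > 0. -/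
/-!
In polar coordinates every integral in the statement becomes a radial integral against
`r ^ (d - 1) dr`, so it suffices that `∫₀^∞ r ^ (d - 1) (r² - γ/2) w r dr > 0` for the weight
`w r = exp (β (γ r² - r⁴))`. Since `w' r = -4β r (r² - γ/2) w r`, integrating the derivative
of `r ^ (d - 2) w r` over `(0, ∞)` gives
`4β ∫₀^∞ r ^ (d - 1) (r² - γ/2) w = (d - 2) ∫₀^∞ r ^ (d - 3) w + 0 ^ (d - 2)`,
which is positive for `d ≥ 2`. The second claim is the first one multiplied by `4β e^{-c}`.
-/

open MeasureTheory Real Set Module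

noncomputable def mexicanHatWeight (β γ r : ℝ) : ℝ := exp (β * (γ * r ^ 2 - r ^ 4))

section Radial

variable (β γ : ℝ)

lemma hasDerivAt_mexicanHatWeight (r : ℝ) :
    HasDerivAt (mexicanHatWeight β γ)
      (-(4 * β) * (r * (r ^ 2 - γ / 2) * mexicanHatWeight β γ r)) r := by
  unfold mexicanHatWeight
  convert ((((hasDerivAt_pow 2 r).const_mul γ).fun_sub (hasDerivAt_pow 4 r)).const_mul β).exp
    using 1
  norm_num
  ring

lemma mexicanHatWeight_pos (r : ℝ) : 0 < mexicanHatWeight β γ r := exp_pos _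

@[fun_prop]
lemma continuous_mexicanHatWeight : Continuous (mexicanHatWeight β γ) := by
  unfold mexicanHatWeight
  fun_prop

variable {β}

lemma mexicanHatWeight_le (hβ : 0 < β) (r : ℝ) :
    mexicanHatWeight β γ r ≤ exp ((β * γ + 1) ^ 2 / (4 * β)) * exp (-1 * r ^ 2) := by
  rw [mexicanHatWeight, ← exp_add, exp_le_exp]
  have hsquare : β * (γ * r ^ 2 - r ^ 4) + r ^ 2 ≤ (β * γ + 1) ^ 2 / (4 * β) := by
    rw [le_div_iff₀ (by positivity)]
    nlinarith [sq_nonneg (2 * β * r ^ 2 - (β * γ + 1))]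
  linarith

lemma integrableOn_pow_mul_mexicanHatWeight (hβ : 0 < β) (n : ℕ) :
    IntegrableOn (fun r ↦ r ^ n * mexicanHatWeight β γ r) (Ioi 0) := by
  have hmaj := (integrableOn_rpow_mul_exp_neg_mul_sq one_pos
    (neg_one_lt_zero.trans_le n.cast_nonneg)).const_mul (exp ((β * γ + 1) ^ 2 / (4 * β)))
  refine hmaj.mono' (by fun_prop) ?_
  filter_upwards [ae_restrict_mem measurableSet_Ioi] with r (hr : 0 < r)
  have := mexicanHatWeight_pos β γ r
  rw [norm_of_nonneg (by positivity), rpow_natCast, mul_left_comm]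
  exact mul_le_mul_of_nonneg_left (mexicanHatWeight_le γ hβ r) (by positivity)

lemma integrableOn_pow_mul_sq_sub_mul_mexicanHatWeight (hβ : 0 < β) (k : ℕ) :
    IntegrableOn (fun r ↦ r ^ (k + 1) * ((r ^ 2 - γ / 2) * mexicanHatWeight β γ r)) (Ioi 0) := by
  have h := (integrableOn_pow_mul_mexicanHatWeight γ hβ (k + 3)).sub
    ((integrableOn_pow_mul_mexicanHatWeight γ hβ (k + 1)).const_mul (γ / 2))
  refine h.congr_fun (fun r _ ↦ ?_) measurableSet_Ioi
  simp only [Pi.sub_apply]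
  ring

lemma four_mul_integral_pow_mul_sq_sub_mul_mexicanHatWeight (hβ : 0 < β) (k : ℕ) :
    4 * β * ∫ r in Ioi 0, r ^ (k + 1) * ((r ^ 2 - γ / 2) * mexicanHatWeight β γ r) =
      0 ^ k + k * ∫ r in Ioi 0, r ^ (k - 1) * mexicanHatWeight β γ r := by
  have hderiv (r : ℝ) : HasDerivAt (fun r ↦ r ^ k * mexicanHatWeight β γ r)
      (k * (r ^ (k - 1) * mexicanHatWeight β γ r) -
        4 * β * (r ^ (k + 1) * ((r ^ 2 - γ / 2) * mexicanHatWeight β γ r))) r := by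
    refine ((hasDerivAt_pow k r).mul (hasDerivAt_mexicanHatWeight β γ r)).congr_deriv ?_
    ring
  have hint₁ := (integrableOn_pow_mul_mexicanHatWeight γ hβ (k - 1)).const_mul (k : ℝ)
  have hint₂ := (integrableOn_pow_mul_sq_sub_mul_mexicanHatWeight γ hβ k).const_mul (4 * β)
  have hlim := tendsto_zero_of_hasDerivAt_of_integrableOn_Ioi (fun r _ ↦ hderiv r)
    (hint₁.sub hint₂) (integrableOn_pow_mul_mexicanHatWeight γ hβ k)
  have hftc := integral_Ioi_of_hasDerivAt_of_tendsto' (fun r _ ↦ hderiv r) (hint₁.sub hint₂) hlim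
  rw [integral_sub hint₁ hint₂, integral_const_mul, integral_const_mul] at hftc
  have hzero : (0 : ℝ) ^ k * mexicanHatWeight β γ 0 = 0 ^ k := by simp [mexicanHatWeight]
  rw [hzero] at hftc
  linarith

lemma integral_pow_mul_mexicanHatWeight_pos (hβ : 0 < β) (n : ℕ) :
    0 < ∫ r in Ioi 0, r ^ n * mexicanHatWeight β γ r := by
  have hnonneg : 0 ≤ᵐ[volume.restrict (Ioi 0)] fun r ↦ r ^ n * mexicanHatWeight β γ r := by
    filter_upwards [ae_restrict_mem measurableSet_Ioi] with r (hr : 0 < r)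
    have := mexicanHatWeight_pos β γ r
    positivity
  rw [setIntegral_pos_iff_support_of_nonneg_ae hnonneg
    (integrableOn_pow_mul_mexicanHatWeight γ hβ n)]
  have hsupp : Ioi (0 : ℝ) ⊆ Function.support (fun r ↦ r ^ n * mexicanHatWeight β γ r) := by
    intro r (hr : 0 < r)
    exact (mul_pos (pow_pos hr n) (mexicanHatWeight_pos β γ r)).ne'
  rw [inter_eq_right.2 hsupp, volume_Ioi]
  exact ENNReal.zero_lt_top

lemma integral_pow_mul_sq_sub_mul_mexicanHatWeight_pos (hβ : 0 < β) (k : ℕ) :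
    0 < ∫ r in Ioi 0, r ^ (k + 1) * ((r ^ 2 - γ / 2) * mexicanHatWeight β γ r) := by
  have hibp := four_mul_integral_pow_mul_sq_sub_mul_mexicanHatWeight γ hβ k
  refine pos_of_mul_pos_right ?_ (by positivity : (0 : ℝ) ≤ 4 * β)
  rcases k with _ | n
  · norm_num at hibp ⊢
    linarith
  · have := integral_pow_mul_mexicanHatWeight_pos γ hβ n
    norm_num at hibp
    rw [hibp]
    positivity

end Radial

section Polar

variable {E : Type*} [NormedAddCommGroup E] [NormedSpace ℝ E] [FiniteDimensional ℝ E]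
  [MeasurableSpace E] [BorelSpace E] (μ : Measure E) [μ.IsAddHaarMeasure] {β : ℝ} (γ : ℝ)

lemma integrable_pow_norm_mul_mexicanHatWeight [Nontrivial E] (hβ : 0 < β) (n : ℕ) :
    Integrable (fun x ↦ ‖x‖ ^ n * mexicanHatWeight β γ ‖x‖) μ := by
  refine (integrable_fun_norm_addHaar μ (f := fun r ↦ r ^ n * mexicanHatWeight β γ r)).2 ?_
  refine (integrableOn_pow_mul_mexicanHatWeight γ hβ (finrank ℝ E - 1 + n)).congr_fun
    (fun r _ ↦ ?_) measurableSet_Ioi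
  simp only [smul_eq_mul, pow_add, mul_assoc]

lemma integral_sq_norm_sub_mul_mexicanHatWeight_pos (hE : 2 ≤ finrank ℝ E) (hβ : 0 < β) :
    0 < ∫ x, (‖x‖ ^ 2 - γ / 2) * mexicanHatWeight β γ ‖x‖ ∂μ := by
  have : Nontrivial E := Module.nontrivial_of_finrank_pos (R := ℝ) (by omega)
  obtain ⟨k, hk⟩ : ∃ k, finrank ℝ E - 1 = k + 1 := ⟨finrank ℝ E - 2, by omega⟩
  rw [integral_fun_norm_addHaar μ (fun r ↦ (r ^ 2 - γ / 2) * mexicanHatWeight β γ r), hk]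
  simp only [nsmul_eq_mul, smul_eq_mul]
  have hball : 0 < μ.real (Metric.ball 0 1) :=
    ENNReal.toReal_pos (Metric.measure_ball_pos μ 0 one_pos).ne' measure_ball_lt_top.ne
  have := integral_pow_mul_sq_sub_mul_mexicanHatWeight_pos γ hβ k
  have : (0 : ℝ) < finrank ℝ E := by exact_mod_cast (by omega : 0 < finrank ℝ E)
  positivity

end Polar

theorem mexican_hat_second_moment_general {d : ℕ} (hd : 2 ≤ d) (β γ : ℝ) (hβ : 0 < β) :
    γ / 2 < (∫ x : EuclideanSpace ℝ (Fin d), ‖x‖ ^ 2 * Real.exp (β * (γ * ‖x‖ ^ 2 - ‖x‖ ^ 4))) /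
        (∫ x : EuclideanSpace ℝ (Fin d), Real.exp (β * (γ * ‖x‖ ^ 2 - ‖x‖ ^ 4))) ∧
    ∀ c : ℝ,
      (∫ x : EuclideanSpace ℝ (Fin d), Real.exp (-(β * (‖x‖ ^ 4 - γ * ‖x‖ ^ 2) + c))) = 1 →
      0 < ∫ x : EuclideanSpace ℝ (Fin d),
        β * (4 * ‖x‖ ^ 2 - 2 * γ) * Real.exp (-(β * (‖x‖ ^ 4 - γ * ‖x‖ ^ 2) + c)) := by
  set E := EuclideanSpace ℝ (Fin d)
  have hE : 2 ≤ finrank ℝ E := by rwa [finrank_euclideanSpace_fin]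
  have : Nontrivial E := Module.nontrivial_of_finrank_pos (R := ℝ) (by omega)
  have hN := integrable_pow_norm_mul_mexicanHatWeight volume γ hβ (E := E) 2
  have hD : Integrable fun x : E ↦ mexicanHatWeight β γ ‖x‖ := by
    simpa using integrable_pow_norm_mul_mexicanHatWeight volume γ hβ (E := E) 0
  have hDpos : 0 < ∫ x : E, mexicanHatWeight β γ ‖x‖ :=
    integral_pos_of_integrable_nonneg_nonzero (x := 0) (by fun_prop) hD
      (fun x ↦ (mexicanHatWeight_pos β γ _).le) (mexicanHatWeight_pos β γ _).ne'
  have hcentred : 0 < (∫ x : E, ‖x‖ ^ 2 * mexicanHatWeight β γ ‖x‖) -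
      γ / 2 * ∫ x : E, mexicanHatWeight β γ ‖x‖ := by
    rw [← integral_const_mul, ← integral_sub hN (hD.const_mul _)]
    simpa only [sub_mul] using integral_sq_norm_sub_mul_mexicanHatWeight_pos volume γ hE hβ
  refine ⟨?_, fun c _ ↦ ?_⟩
  · show γ / 2 <
      (∫ x : E, ‖x‖ ^ 2 * mexicanHatWeight β γ ‖x‖) / ∫ x : E, mexicanHatWeight β γ ‖x‖
    rw [lt_div_iff₀ hDpos]
    linarith
  have hrw (x : E) : β * (4 * ‖x‖ ^ 2 - 2 * γ) * exp (-(β * (‖x‖ ^ 4 - γ * ‖x‖ ^ 2) + c)) =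
      4 * β * exp (-c) *
        (‖x‖ ^ 2 * mexicanHatWeight β γ ‖x‖ - γ / 2 * mexicanHatWeight β γ ‖x‖) := by
    rw [mexicanHatWeight, show -(β * (‖x‖ ^ 4 - γ * ‖x‖ ^ 2) + c) =
      β * (γ * ‖x‖ ^ 2 - ‖x‖ ^ 4) + -c by ring, exp_add]
    ring
  simp_rw [hrw]
  rw [integral_const_mul, integral_sub hN (hD.const_mul _), integral_const_mul]
  exact mul_pos (by positivity) hcentred

theorem mexican_hat_second_moment {d : ℕ} (hd : 2 ≤ d) (β γ : ℝ) (hβ : 0 < β) (hγ : 0 < γ) :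
    γ / 2 < (∫ x : EuclideanSpace ℝ (Fin d), ‖x‖ ^ 2 * Real.exp (β * (γ * ‖x‖ ^ 2 - ‖x‖ ^ 4))) /
        (∫ x : EuclideanSpace ℝ (Fin d), Real.exp (β * (γ * ‖x‖ ^ 2 - ‖x‖ ^ 4))) ∧
    ∀ c : ℝ,
      (∫ x : EuclideanSpace ℝ (Fin d), Real.exp (-(β * (‖x‖ ^ 4 - γ * ‖x‖ ^ 2) + c))) = 1 →
      0 < ∫ x : EuclideanSpace ℝ (Fin d),
        β * (4 * ‖x‖ ^ 2 - 2 * γ) * Real.exp (-(β * (‖x‖ ^ 4 - γ * ‖x‖ ^ 2) + c)) :=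
  mexican_hat_second_moment_general hd β γ hβ
end

section
/- Let V : ℝ^d → ℝ be convex and differentiable, with e^{−V} Lebesgue-integrable. If x ≠ y satisfy (x−y)·(∇V(x)−∇V(y)) = 0, then ∇V(x) = ∇V(y), and V is affine on the segment [x,y]. -/
/-!
Adding the first-order convexity inequalities at `x` and `y` shows that the tangent plane of `V`
at `x` passes through `(y, V y)`. Then `y` minimizes `V - ⟪∇V x, ·⟫`, which forces `∇V y = ∇V x`,
and on `[x, y]` convexity squeezes `V` between that tangent plane and the chord, which coincide.
-/

open MeasureTheory Real

open Set

namespace ConvexOn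

variable {E : Type*} [NormedAddCommGroup E] [NormedSpace ℝ E] {V : E → ℝ} {x y : E}

theorem add_fderiv_sub_le (hV : ConvexOn ℝ univ V) (hx : DifferentiableAt ℝ V x) (w : E) :
    V x + fderiv ℝ V x (w - x) ≤ V w := by
  have hx' : HasFDerivAt V (fderiv ℝ V x) (AffineMap.lineMap x w (0 : ℝ)) := by
    simpa using hx.hasFDerivAt
  have hline : HasDerivAt (V ∘ AffineMap.lineMap (k := ℝ) x w) (fderiv ℝ V x (w - x)) 0 :=
    hx'.comp_hasDerivAt 0 AffineMap.hasDerivAt_lineMap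
  have hslope := (hV.comp_affineMap (AffineMap.lineMap (k := ℝ) x w)).le_slope_of_hasDerivAt
    (mem_univ 0) (mem_univ 1) one_pos hline
  simp only [slope, Function.comp_apply, AffineMap.lineMap_apply_zero, AffineMap.lineMap_apply_one,
    sub_zero, inv_one, one_smul] at hslope
  exact le_sub_iff_add_le'.1 hslope

theorem eq_add_fderiv_sub_of_fderiv_sub_apply_eq (hV : ConvexOn ℝ univ V)
    (hx : DifferentiableAt ℝ V x) (hy : DifferentiableAt ℝ V y)
    (h : (fderiv ℝ V x - fderiv ℝ V y) (x - y) = 0) :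
    V y = V x + fderiv ℝ V x (y - x) := by
  have hxy := hV.add_fderiv_sub_le hx y
  have hyx := hV.add_fderiv_sub_le hy x
  have : fderiv ℝ V x (y - x) = - fderiv ℝ V y (x - y) := by
    rw [← neg_sub x y, map_neg, neg_inj]
    simpa [sub_eq_zero] using h
  linarith

theorem fderiv_eq_of_eq_add_fderiv_sub (hV : ConvexOn ℝ univ V)
    (hx : DifferentiableAt ℝ V x) (hy : DifferentiableAt ℝ V y)
    (h : V y = V x + fderiv ℝ V x (y - x)) :
    fderiv ℝ V y = fderiv ℝ V x := by
  set L := fderiv ℝ V x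
  have hmin : IsLocalMin (fun w => V w - L w) y := by
    refine Filter.Eventually.of_forall fun w => ?_
    have := hV.add_fderiv_sub_le hx w
    simp only [map_sub, L] at h this ⊢
    linarith
  exact sub_eq_zero.1 (hmin.hasFDerivAt_eq_zero (hy.hasFDerivAt.sub L.hasFDerivAt))

theorem affine_on_segment_of_subgradient_eq (hV : ConvexOn ℝ univ V) (L : E →L[ℝ] ℝ)
    (hL : ∀ w, V x + L (w - x) ≤ V w) (h : V y = V x + L (y - x))
    {t : ℝ} (ht : t ∈ Icc (0 : ℝ) 1) :
    V (x + t • (y - x)) = V x + t * (V y - V x) := by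
  have hupper : V (x + t • (y - x)) ≤ V x + t * (V y - V x) := by
    have := hV.2 (mem_univ x) (mem_univ y) (sub_nonneg.2 ht.2) ht.1 (sub_add_cancel 1 t)
    rw [show (1 - t) • x + t • y = x + t • (y - x) by module, smul_eq_mul, smul_eq_mul]
      at this
    linarith
  have hlower := hL (x + t • (y - x))
  rw [add_sub_cancel_left, map_smul, smul_eq_mul, show L (y - x) = V y - V x by linarith] at hlower
  linarith

end ConvexOn

theorem convex_gradient_degenerate_general {d : ℕ} (V : EuclideanSpace ℝ (Fin d) → ℝ)
    (hconv : ConvexOn ℝ Set.univ V) (hdiff : Differentiable ℝ V)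
    (x y : EuclideanSpace ℝ (Fin d))
    (h0 : (inner ℝ (x - y) (gradient V x - gradient V y) : ℝ) = 0) :
    gradient V x = gradient V y ∧
      ∀ t : ℝ, t ∈ Set.Icc (0 : ℝ) 1 →
        V (x + t • (y - x)) = V x + t * (V y - V x) := by
  have hmono : (fderiv ℝ V x - fderiv ℝ V y) (x - y) = 0 := by
    rwa [real_inner_comm, inner_sub_left, inner_gradient_left, inner_gradient_left] at h0
  have htouch := hconv.eq_add_fderiv_sub_of_fderiv_sub_apply_eq (hdiff x) (hdiff y) hmono
  refine ⟨?_, fun t ht => hconv.affine_on_segment_of_subgradient_eq _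
    (hconv.add_fderiv_sub_le (hdiff x)) htouch ht⟩
  rw [gradient, gradient, hconv.fderiv_eq_of_eq_add_fderiv_sub (hdiff x) (hdiff y) htouch]

theorem convex_gradient_degenerate {d : ℕ} (V : EuclideanSpace ℝ (Fin d) → ℝ)
    (hconv : ConvexOn ℝ Set.univ V) (hdiff : Differentiable ℝ V)
    (hint : Integrable fun x => Real.exp (-V x))
    (x y : EuclideanSpace ℝ (Fin d)) (hxy : x ≠ y)
    (h0 : (inner ℝ (x - y) (gradient V x - gradient V y) : ℝ) = 0) :
    gradient V x = gradient V y ∧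
      ∀ t : ℝ, t ∈ Set.Icc (0 : ℝ) 1 →
        V (x + t • (y - x)) = V x + t * (V y - V x) :=
  convex_gradient_degenerate_general V hconv hdiff x y h0
end

section
/- Let φ(x) = sin(x) + α on the one-dimensional torus [0, 2π] with uniform probability measure μ, Poincaré constant η = 1, E = ∫φ dμ = α, and ∫φ² dμ = 1/2 + α². Then the criterion −(inf φ)·(∫φ² dμ)/(∫φ dμ)² < η, i.e. (1−α)(1+2α²)/(2α²) < 1, holds if and only if α > α₀, where α₀ ∈ (0,1) is the unique real root of α³ + α/2 − 1/2 = 0. In particular there exist α ∈ (α₀, 1) for which the criterion holds while inf φ = α − 1 < 0. -/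
open Real intervalIntegral

lemma integral_sin_add_const_zero_two_pi (a : ℝ) :
    ∫ x in (0:ℝ)..(2 * π), (sin x + a) = 2 * π * a := by
  rw [integral_add intervalIntegrable_sin intervalIntegrable_const, integral_sin, integral_const]
  simp

lemma integral_sin_add_const_sq_zero_two_pi (a : ℝ) :
    ∫ x in (0:ℝ)..(2 * π), (sin x + a) ^ 2 = π + 2 * π * a ^ 2 := by
  have hexpand : ∀ x : ℝ, (sin x + a) ^ 2 = sin x ^ 2 + (2 * a * sin x + a ^ 2) := fun x => by ring
  simp only [hexpand]
  rw [integral_add (f := fun x => sin x ^ 2) ((continuous_sin.pow 2).intervalIntegrable _ _)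
      ((intervalIntegrable_sin.const_mul _).add intervalIntegrable_const),
    integral_add (intervalIntegrable_sin.const_mul _) intervalIntegrable_const,
    integral_sin_sq, integral_const_mul, integral_sin, integral_const]
  simp

lemma sin_three_pi_div_two : sin (3 * π / 2) = -1 := by
  rw [show 3 * π / 2 = π / 2 + π by ring, sin_add_pi, sin_pi_div_two]

lemma isGLB_image_sin_add_const_Icc_zero_two_pi (a : ℝ) :
    IsGLB ((fun x => sin x + a) '' Set.Icc 0 (2 * π)) (a - 1) := by
  refine IsLeast.isGLB ⟨⟨3 * π / 2, ⟨by positivity, by linarith [pi_pos]⟩, ?_⟩, ?_⟩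
  · simp only [sin_three_pi_div_two]
    ring
  · rintro _ ⟨x, -, rfl⟩
    linarith [neg_one_le_sin x]

lemma strictMono_cubic : StrictMono (fun a : ℝ => a ^ 3 + a / 2 - 1 / 2) := by
  intro a b hab
  nlinarith [sq_nonneg (a + b), sq_nonneg a, sq_nonneg b]

lemma exists_cubic_eq_zero_mem_Ioo :
    ∃ a ∈ Set.Ioo (0:ℝ) 1, a ^ 3 + a / 2 - 1 / 2 = 0 := by
  have hcont : ContinuousOn (fun a : ℝ => a ^ 3 + a / 2 - 1 / 2) (Set.Icc 0 1) := by fun_prop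
  exact intermediate_value_Ioo (zero_le_one' ℝ) hcont
    (show (0:ℝ) ∈ Set.Ioo (0 ^ 3 + 0 / 2 - 1 / 2) (1 ^ 3 + 1 / 2 - 1 / 2) by norm_num)

lemma criterion_lt_one_iff {a : ℝ} (ha : 0 < a) :
    (1 - a) * (1 + 2 * a ^ 2) / (2 * a ^ 2) < 1 ↔ 0 < a ^ 3 + a / 2 - 1 / 2 := by
  rw [div_lt_one (by positivity)]
  constructor <;> intro h <;> nlinarith

theorem torus_criterion :
    (∀ α : ℝ, (1 / (2 * π)) * ∫ x in (0:ℝ)..(2 * π), (Real.sin x + α) = α) ∧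
    (∀ α : ℝ, (1 / (2 * π)) * ∫ x in (0:ℝ)..(2 * π), (Real.sin x + α) ^ 2 = 1 / 2 + α ^ 2) ∧
    (∀ α : ℝ, IsGLB ((fun x => Real.sin x + α) '' Set.Icc 0 (2 * π)) (α - 1)) ∧
    ∃ α₀ : ℝ, (α₀ ^ 3 + α₀ / 2 - 1 / 2 = 0) ∧
      (∀ β : ℝ, β ^ 3 + β / 2 - 1 / 2 = 0 → β = α₀) ∧
      α₀ ∈ Set.Ioo (0 : ℝ) 1 ∧
      (∀ α : ℝ, 0 < α →
        ((1 - α) * (1 + 2 * α ^ 2) / (2 * α ^ 2) < 1 ↔ α₀ < α)) ∧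
      ∃ α ∈ Set.Ioo α₀ 1,
        (1 - α) * (1 + 2 * α ^ 2) / (2 * α ^ 2) < 1 ∧ α - 1 < 0 := by
  have hπ : π ≠ 0 := pi_ne_zero
  refine ⟨fun α => ?_, fun α => ?_, isGLB_image_sin_add_const_Icc_zero_two_pi, ?_⟩
  · rw [integral_sin_add_const_zero_two_pi]
    field_simp
  · rw [integral_sin_add_const_sq_zero_two_pi]
    field_simp
  obtain ⟨α₀, hα₀, hroot⟩ := exists_cubic_eq_zero_mem_Ioo
  have hcriterion : ∀ α : ℝ, 0 < α →
      ((1 - α) * (1 + 2 * α ^ 2) / (2 * α ^ 2) < 1 ↔ α₀ < α) := fun α hα => by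
    rw [criterion_lt_one_iff hα, ← hroot]
    exact strictMono_cubic.lt_iff_lt
  refine ⟨α₀, hroot, fun β hβ => strictMono_cubic.injective (hβ.trans hroot.symm), hα₀,
    hcriterion, (α₀ + 1) / 2, ⟨by linarith [hα₀.2], by linarith [hα₀.2]⟩, ?_, by linarith [hα₀.2]⟩
  exact (hcriterion _ (by linarith [hα₀.1])).mpr (by linarith [hα₀.2])
end
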